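/- With the n-dependent strategy φ(1,n)=1, φ(2,n)=0, φ(3,n)= parity indicator of n, and t_A, t_B : ℕ → {1,2,3} independent i.i.d. uniform sequences, the concordance sequence C_n = indicator(φ(t_A(n),n) = φ(t_B(n),n)) satisfies: almost surely the limiting frequency of 1's in (C_n) equals 5/9, hence C is almost surely not 1-Borel normal. -/

import Mathlib

/-!
Whatever the parity of `n`, the strategy `φ(·, n)` splits `{0, 1, 2}` into answer classes of
sizes 2 and 1, so `2² + 1² = 5` of the 9 equally likely pairs `(t_A n, t_B n)` are concordant.
The concordance indicators are therefore independent Bernoulli(5/9) variables, and the strong law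
of large numbers gives the limiting frequency `5/9 ≠ 1/2`.
-/

open MeasureTheory ProbabilityTheory Filter Finset Topology

lemma identDistrib_indicator_one {Ω Ω' : Type*} [MeasurableSpace Ω] [MeasurableSpace Ω']
    {μ : Measure Ω} {ν : Measure Ω'} [IsProbabilityMeasure μ] [IsProbabilityMeasure ν]
    {s : Set Ω} {t : Set Ω'} (hs : MeasurableSet s) (ht : MeasurableSet t) (hst : μ s = ν t) :
    IdentDistrib (s.indicator (1 : Ω → ℝ)) (t.indicator 1) μ ν where
  aemeasurable_fst := (measurable_one.indicator hs).aemeasurable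
  aemeasurable_snd := (measurable_one.indicator ht).aemeasurable
  map_eq := by
    classical
    ext u hu
    rw [Measure.map_apply (measurable_one.indicator hs) hu,
      Measure.map_apply (measurable_one.indicator ht) hu, Pi.one_def, Pi.one_def,
      Set.indicator_const_preimage_eq_union, Set.indicator_const_preimage_eq_union]
    split_ifs <;> simp [prob_compl_eq_one_sub hs, prob_compl_eq_one_sub ht, hst]

theorem ae_tendsto_card_filter_mem_div {Ω β : Type*} [MeasurableSpace Ω] [MeasurableSpace β]
    {μ : Measure Ω} [IsProbabilityMeasure μ] {Y : ℕ → Ω → β} (hY : ∀ n, Measurable (Y n))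
    (hindep : Pairwise fun i j => IndepFun (Y i) (Y j) μ) {D : ℕ → Set β}
    [∀ n, DecidablePred (· ∈ D n)] (hD : ∀ n, MeasurableSet (D n)) {p : ENNReal}
    (hp : ∀ n, μ (Y n ⁻¹' D n) = p) :
    ∀ᵐ ω ∂μ, Tendsto (fun N : ℕ => (#{n ∈ range N | Y n ω ∈ D n} : ℝ) / N) atTop
      (𝓝 p.toReal) := by
  let X : ℕ → Ω → ℝ := fun n => (Y n ⁻¹' D n).indicator 1
  have hE n : MeasurableSet (Y n ⁻¹' D n) := hY n (hD n)
  have hXindep : Pairwise fun i j => IndepFun (X i) (X j) μ := fun i j hij =>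
    (hindep hij).comp (measurable_one.indicator (hD i)) (measurable_one.indicator (hD j))
  have hident n : IdentDistrib (X n) (X 0) μ μ :=
    identDistrib_indicator_one (hE n) (hE 0) ((hp n).trans (hp 0).symm)
  have hmean : μ[X 0] = p.toReal := by
    rw [integral_indicator_one (hE 0), measureReal_def, hp 0]
  have hslln := strong_law_ae_real X ((integrable_const 1).indicator (hE 0)) hXindep hident
  rw [hmean] at hslln
  filter_upwards [hslln] with ω hω
  convert hω using 3 with N
  rw [natCast_card_filter]
  exact sum_congr rfl fun n _ => by
    by_cases h : Y n ω ∈ D n <;> simp [X, h]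

lemma PMF.toMeasure_uniformOfFintype_setOf {α : Type*} [Fintype α] [Nonempty α]
    [MeasurableSpace α] [MeasurableSingletonClass α] (P : α → Prop) [DecidablePred P] :
    (PMF.uniformOfFintype α).toMeasure {a | P a} = #{a | P a} / Fintype.card α := by
  rw [PMF.toMeasure_uniformOfFintype_apply (s := {a | P a}) (Set.toFinite _).measurableSet,
    Fintype.card_subtype]
  rfl

lemma card_concordant_pairs_eq_five (φ : Fin 3 → ℕ → Fin 2) (h1 : ∀ n, φ 0 n = 1) (h2 : ∀ n, φ 1 n = 0)
    (h3 : ∀ n, φ 2 n = if Even n then 1 else 0) (n : ℕ) :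
    #{q : Fin 3 × Fin 3 | φ q.1 n = φ q.2 n} = 5 := by
  have hφ a : φ a n = ![1, 0, if Even n then 1 else 0] a := by
    fin_cases a <;> simp [h1, h2, h3]
  simp only [hφ]
  split_ifs <;> decide

theorem stmt_4 {Ω : Type*} [MeasurableSpace Ω] (μ : Measure Ω) [IsProbabilityMeasure μ]
    (tA tB : ℕ → Ω → Fin 3)
    (hm : ∀ n, Measurable (fun ω => (tA n ω, tB n ω)))
    (hiid : ∀ n, Measure.map (fun ω => (tA n ω, tB n ω)) μ =
      (PMF.uniformOfFintype (Fin 3 × Fin 3)).toMeasure)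
    (hindep : iIndepFun (fun n ω => (tA n ω, tB n ω)) μ)
    (φ : Fin 3 → ℕ → Fin 2)
    (h1 : ∀ n, φ 0 n = 1) (h2 : ∀ n, φ 1 n = 0)
    (h3 : ∀ n, φ 2 n = if Even n then 1 else 0) :
    ∀ᵐ ω ∂μ,
      Tendsto (fun N : ℕ =>
          ((Finset.range N).filter (fun n => φ (tA n ω) n = φ (tB n ω) n)).card / (N : ℝ))
        atTop (nhds (5/9)) ∧
      ¬ Tendsto (fun N : ℕ =>
          ((Finset.range N).filter (fun n => φ (tA n ω) n = φ (tB n ω) n)).card / (N : ℝ))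
        atTop (nhds (1/2)) := by
  have hconcordant n :
      μ ((fun ω => (tA n ω, tB n ω)) ⁻¹' {q | φ q.1 n = φ q.2 n}) = 5 / 9 := by
    rw [← Measure.map_apply (hm n) (Set.toFinite _).measurableSet, hiid n,
      PMF.toMeasure_uniformOfFintype_setOf, card_concordant_pairs_eq_five φ h1 h2 h3 n]
    norm_num
  have hfreq := ae_tendsto_card_filter_mem_div hm (fun i j hij => hindep.indepFun hij)
    (fun n => (Set.toFinite _).measurableSet) hconcordant
  filter_upwards [hfreq] with ω hω
  rw [ENNReal.toReal_div] at hω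
  norm_num at hω
  exact ⟨hω, fun h => absurd (tendsto_nhds_unique hω h) (by norm_num)⟩
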